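/- Let R be a ring with a rigid endomorphism α, and suppose α(a·b) = 0 for some a, b ∈ R. Then α(α(a))·α(b) = 0. -/

import Mathlib

/-!
A rigid endomorphism forces `u * v = 0 → v * α u = 0`, since `x := v * α u` satisfies
`x * α x = v * α (u * v) * α (α u)`. Taking `u = v = c` shows the ring is reduced, and in a
reduced ring `x * y = 0 ↔ y * x = 0` because `(y * x) * (y * x) = y * (x * y) * x`. The theorem
follows by applying the first fact to `α a * α b = α (a * b) = 0` and then swapping the factors.
-/

section SemigroupWithZero

variable {R F : Type*} [SemigroupWithZero R]

theorem mul_eq_zero_comm_of_mul_self_eq_zero (hred : ∀ c : R, c * c = 0 → c = 0) {x y : R} :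
    x * y = 0 ↔ y * x = 0 := by
  have swap : ∀ x y : R, x * y = 0 → y * x = 0 := fun x y hxy =>
    hred _ <| by rw [mul_assoc, ← mul_assoc x, hxy, zero_mul, mul_zero]
  exact ⟨swap x y, swap y x⟩

def IsRigid [FunLike F R R] (α : F) : Prop :=
  ∀ a : R, a * α a = 0 → a = 0

namespace IsRigid

variable [FunLike F R R] [MulHomClass F R R] [ZeroHomClass F R R] {α : F}

theorem mul_map_eq_zero_of_mul_eq_zero (hα : IsRigid α) {u v : R} (huv : u * v = 0) :
    v * α u = 0 :=
  hα _ <| calc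
    v * α u * α (v * α u) = v * α (u * v) * α (α u) := by simp only [map_mul, mul_assoc]
    _ = 0 := by rw [huv, map_zero, mul_zero, zero_mul]

theorem eq_zero_of_mul_self_eq_zero (hα : IsRigid α) {c : R} (hc : c * c = 0) : c = 0 :=
  hα c (hα.mul_map_eq_zero_of_mul_eq_zero hc)

theorem mul_eq_zero_comm (hα : IsRigid α) {x y : R} : x * y = 0 ↔ y * x = 0 :=
  mul_eq_zero_comm_of_mul_self_eq_zero fun _ => hα.eq_zero_of_mul_self_eq_zero

end IsRigid

end SemigroupWithZero

theorem rigid_lemma_kav {R : Type*} [Ring R] (α : R →+* R)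
    (hrigid : ∀ a : R, a * α a = 0 → a = 0)
    (a b : R) (h : α (a * b) = 0) :
    α (α a) * α b = 0 := by
  have hα : IsRigid α := hrigid
  have hab : α a * α b = 0 := by rwa [← map_mul]
  exact hα.mul_eq_zero_comm.mp (hα.mul_map_eq_zero_of_mul_eq_zero hab)
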